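/- arXiv:2501.18207 — 4 statements merged into one kernel-verified Lean document; each statement's English description precedes it below -/
import Mathlib

section
/- Let J > 0 and Δε > 0. On E = ℝ² × ℕ equipped with the measure μ = (Lebesgue on ℝ²) ⊗ (counting measure on ℕ), define ε̄(ω, n) = (J/2)|ω|² + nΔε. Then the pushforward measure ε̄ # μ on [0,∞) is absolutely continuous with respect to Lebesgue measure with density φ_total(I) = (2π/J)·⌈I/Δε⌉ (where ⌈·⌉ is the ceiling function); equivalently, for every I ≥ 0, μ({(ω, n) ∈ ℝ² × ℕ : (J/2)|ω|² + nΔε < I}) = ∫₀^I (2π/J)·⌈s/Δε⌉ ds. -/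
open MeasureTheory Real Set

lemma aux_vol (J : ℝ) (hJ : 0 < J) (c : ℝ) :
    volume {ω : EuclideanSpace ℝ (Fin 2) | J / 2 * ‖ω‖ ^ 2 < c} =
      ENNReal.ofReal (2 * π / J) * ENNReal.ofReal c := by
  rcases le_or_gt c 0 with hc | hc
  · have h1 : {ω : EuclideanSpace ℝ (Fin 2) | J / 2 * ‖ω‖ ^ 2 < c} = ∅ := by
      ext ω
      simp only [mem_setOf_eq, mem_empty_iff_false, iff_false, not_lt]
      exact hc.trans (by positivity)
    rw [h1, measure_empty, ENNReal.ofReal_eq_zero.2 hc, mul_zero]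
  · have hcJ : 0 ≤ 2 * c / J := by positivity
    have h1 : {ω : EuclideanSpace ℝ (Fin 2) | J / 2 * ‖ω‖ ^ 2 < c} =
        Metric.ball (0 : EuclideanSpace ℝ (Fin 2)) (Real.sqrt (2 * c / J)) := by
      ext ω
      simp only [mem_setOf_eq, Metric.mem_ball, dist_zero_right]
      rw [show (‖ω‖ < Real.sqrt (2 * c / J)) ↔ ‖ω‖ ^ 2 < 2 * c / J from
        Real.lt_sqrt (norm_nonneg ω), lt_div_iff₀ hJ]
      constructor <;> intro h <;> nlinarith
    rw [h1, EuclideanSpace.volume_ball]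
    have hcard : (Fintype.card (Fin 2)) = 2 := by simp
    rw [hcard]
    have h2 : Real.sqrt π ^ 2 / Real.Gamma ((2:ℕ) / 2 + 1) = π := by
      rw [Real.sq_sqrt pi_pos.le]
      norm_num [Real.Gamma_two]
    rw [h2, ← ENNReal.ofReal_pow (Real.sqrt_nonneg _), Real.sq_sqrt hcJ,
      ← ENNReal.ofReal_mul hcJ, ← ENNReal.ofReal_mul (by positivity)]
    congr 1
    field_simp

lemma aux_meas (J Δε : ℝ) :
    Measurable (fun p : EuclideanSpace ℝ (Fin 2) × ℕ => J / 2 * ‖p.1‖ ^ 2 + p.2 * Δε) := by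
  fun_prop

lemma aux_map (J Δε : ℝ) (hJ : 0 < J) (I : ℝ) :
    (volume.prod Measure.count)
        {p : EuclideanSpace ℝ (Fin 2) × ℕ | J / 2 * ‖p.1‖ ^ 2 + p.2 * Δε < I} =
      ENNReal.ofReal (2 * π / J) * ∑' n : ℕ, ENNReal.ofReal (I - n * Δε) := by
  have hmeas : MeasurableSet
      {p : EuclideanSpace ℝ (Fin 2) × ℕ | J / 2 * ‖p.1‖ ^ 2 + p.2 * Δε < I} :=
    measurableSet_lt (aux_meas J Δε) measurable_const
  rw [show (Measure.count : Measure ℕ) = Measure.sum Measure.dirac from rfl,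
    Measure.prod_sum_right, Measure.sum_apply _ hmeas]
  have hterm : ∀ n : ℕ, (volume.prod (Measure.dirac n))
      {p : EuclideanSpace ℝ (Fin 2) × ℕ | J / 2 * ‖p.1‖ ^ 2 + p.2 * Δε < I} =
      ENNReal.ofReal (2 * π / J) * ENNReal.ofReal (I - n * Δε) := by
    intro n
    rw [Measure.prod_dirac, Measure.map_apply (measurable_prodMk_right) hmeas]
    have hpre : (fun ω : EuclideanSpace ℝ (Fin 2) => (ω, n)) ⁻¹'
        {p : EuclideanSpace ℝ (Fin 2) × ℕ | J / 2 * ‖p.1‖ ^ 2 + p.2 * Δε < I} =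
        {ω : EuclideanSpace ℝ (Fin 2) | J / 2 * ‖ω‖ ^ 2 < I - n * Δε} := by
      ext ω
      simp only [mem_preimage, mem_setOf_eq]
      constructor <;> intro h <;> linarith
    rw [hpre, aux_vol J hJ]
  simp_rw [hterm]
  rw [ENNReal.tsum_mul_left]

lemma aux_ceil (Δε : ℝ) (hΔε : 0 < Δε) {s : ℝ} (hs : 0 < s) :
    ∑' n : ℕ, (Set.Ioi ((n : ℝ) * Δε)).indicator (fun _ => (1 : ENNReal)) s =
      ((⌈s / Δε⌉.toNat : ℕ) : ENNReal) := by
  set k := ⌈s / Δε⌉.toNat with hk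
  have hk0 : (0:ℤ) < ⌈s / Δε⌉ := Int.ceil_pos.2 (div_pos hs hΔε)
  have hkk : (k : ℤ) = ⌈s / Δε⌉ := Int.toNat_of_nonneg hk0.le
  have h1 : ∀ n : ℕ, (Set.Ioi ((n : ℝ) * Δε)).indicator (fun _ => (1 : ENNReal)) s =
      if n < k then 1 else 0 := by
    intro n
    have hiff : (n : ℝ) * Δε < s ↔ n < k := by
      rw [← lt_div_iff₀ hΔε, show ((n:ℝ) = ((n:ℤ):ℝ)) by push_cast; ring, ← Int.lt_ceil,
        ← hkk]
      exact_mod_cast Iff.rfl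
    simp only [Set.indicator_apply, mem_Ioi, hiff]
  rw [tsum_congr h1, tsum_eq_sum (s := Finset.range k)
    (fun n hn => if_neg (fun h => hn (Finset.mem_range.2 h)))]
  rw [Finset.sum_congr rfl (fun n hn => if_pos (Finset.mem_range.1 hn))]
  simp

lemma aux_lint (J Δε : ℝ) (hJ : 0 < J) (hΔε : 0 < Δε) (I : ℝ) :
    ∫⁻ s in Set.Ioc (0:ℝ) I, ENNReal.ofReal (2 * π / J * (⌈s / Δε⌉ : ℝ)) =
      ENNReal.ofReal (2 * π / J) * ∑' n : ℕ, ENNReal.ofReal (I - n * Δε) := by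
  have hpt : ∀ s ∈ Set.Ioc (0:ℝ) I,
      ENNReal.ofReal (2 * π / J * (⌈s / Δε⌉ : ℝ)) =
        ENNReal.ofReal (2 * π / J) *
          ∑' n : ℕ, (Set.Ioi ((n : ℝ) * Δε)).indicator (fun _ => (1 : ENNReal)) s := by
    intro s hs
    rw [aux_ceil Δε hΔε hs.1, ENNReal.ofReal_mul (by positivity)]
    congr 1
    rw [show ((⌈s / Δε⌉ : ℝ)) = ((⌈s / Δε⌉.toNat : ℕ) : ℝ) by
      rw [← Int.cast_natCast, Int.toNat_of_nonneg (Int.ceil_pos.2 (div_pos hs.1 hΔε)).le]]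
    exact ENNReal.ofReal_natCast _
  rw [setLIntegral_congr_fun measurableSet_Ioc hpt,
    lintegral_const_mul' _ _ ENNReal.ofReal_ne_top,
    lintegral_tsum (f := fun (n : ℕ) (a : ℝ) =>
      (Set.Ioi ((n : ℝ) * Δε)).indicator (fun _ => (1 : ENNReal)) a)
      (fun n => (measurable_const.indicator measurableSet_Ioi).aemeasurable)]
  congr 1
  refine tsum_congr fun n => ?_
  rw [lintegral_indicator measurableSet_Ioi, setLIntegral_one,
    Measure.restrict_apply measurableSet_Ioi, Set.inter_comm, Set.Ioc_inter_Ioi,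
    max_eq_right (by positivity), Real.volume_Ioc]

lemma aux_tsum_ne_top (Δε : ℝ) (hΔε : 0 < Δε) (I : ℝ) :
    ∑' n : ℕ, ENNReal.ofReal (I - n * Δε) ≠ ⊤ := by
  rw [tsum_eq_sum (s := Finset.range ⌈I / Δε⌉.toNat) ?_]
  · exact (ENNReal.sum_lt_top.2 fun _ _ => ENNReal.ofReal_lt_top).ne
  · intro n hn
    have hn' : (⌈I / Δε⌉.toNat : ℝ) ≤ (n : ℝ) := by
      exact_mod_cast le_of_not_gt (fun h => hn (Finset.mem_range.2 h))
    have h2 : I / Δε ≤ (n : ℝ) := by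
      refine le_trans (le_trans (Int.le_ceil _) ?_) hn'
      exact_mod_cast Int.self_le_toNat _
    rw [ENNReal.ofReal_eq_zero]
    have := (div_le_iff₀ hΔε).1 h2
    linarith

lemma aux_ceil_meas (J Δε : ℝ) :
    Measurable (fun s : ℝ => 2 * π / J * (⌈s / Δε⌉ : ℝ)) := by
  have h1 : Measurable fun s : ℝ => (⌈s / Δε⌉ : ℝ) :=
    measurable_from_top.comp (Int.measurable_ceil.comp (measurable_id.div_const Δε))
  exact h1.const_mul _

/-- The total internal energy law of the diatomic model (classical rotation in ℝ² plus
quantum harmonic vibration): the pushforward of Lebesgue ⊗ counting by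
`(ω,n) ↦ (J/2)|ω|² + nΔε` has density `I ↦ (2π/J)⌈I/Δε⌉` with respect to Lebesgue
measure on `[0,∞)`; equivalently the measure of the sublevel set `{ε̄ < I}` is
`∫₀^I (2π/J)⌈s/Δε⌉ ds` for every `I ≥ 0`. -/
theorem stmt_3 (J Δε : ℝ) (hJ : 0 < J) (hΔε : 0 < Δε) :
    Measure.map (fun p : EuclideanSpace ℝ (Fin 2) × ℕ => J / 2 * ‖p.1‖ ^ 2 + p.2 * Δε)
        (volume.prod Measure.count) =
      (volume.restrict (Set.Ici (0 : ℝ))).withDensity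
        (fun I => ENNReal.ofReal (2 * π / J * (⌈I / Δε⌉ : ℝ))) ∧
    ∀ I : ℝ, 0 ≤ I →
      (volume.prod Measure.count)
          {p : EuclideanSpace ℝ (Fin 2) × ℕ | J / 2 * ‖p.1‖ ^ 2 + p.2 * Δε < I} =
        ENNReal.ofReal (∫ s in (0:ℝ)..I, 2 * π / J * (⌈s / Δε⌉ : ℝ)) := by
  have hL : ∀ a : ℝ, Measure.map
      (fun p : EuclideanSpace ℝ (Fin 2) × ℕ => J / 2 * ‖p.1‖ ^ 2 + p.2 * Δε)
      (volume.prod Measure.count) (Set.Iio a) =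
      ENNReal.ofReal (2 * π / J) * ∑' n : ℕ, ENNReal.ofReal (a - n * Δε) := by
    intro a
    rw [Measure.map_apply (aux_meas J Δε) measurableSet_Iio]
    exact aux_map J Δε hJ a
  have hR : ∀ a : ℝ, (volume.restrict (Set.Ici (0 : ℝ))).withDensity
      (fun I => ENNReal.ofReal (2 * π / J * (⌈I / Δε⌉ : ℝ))) (Set.Iio a) =
      ENNReal.ofReal (2 * π / J) * ∑' n : ℕ, ENNReal.ofReal (a - n * Δε) := by
    intro a
    rw [withDensity_apply _ measurableSet_Iio, Measure.restrict_restrict measurableSet_Iio,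
      show Set.Iio a ∩ Set.Ici (0:ℝ) = Set.Ico 0 a from by rw [inter_comm, Set.Ici_inter_Iio],
      Measure.restrict_congr_set Ico_ae_eq_Ioc]
    exact aux_lint J Δε hJ hΔε a
  constructor
  · refine Measure.ext_of_generateFrom_of_iUnion (Set.range Set.Iio)
      (fun n : ℕ => Set.Iio n) ?_ isPiSystem_Iio ?_ (fun n => Set.mem_range_self _) ?_ ?_
    · exact (BorelSpace.measurable_eq (α := ℝ)).trans (borel_eq_generateFrom_Iio ℝ)
    · ext x
      simp only [Set.mem_iUnion, Set.mem_Iio, Set.mem_univ, iff_true]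
      exact exists_nat_gt x
    · intro n
      rw [hL]
      exact ENNReal.mul_ne_top ENNReal.ofReal_ne_top (aux_tsum_ne_top Δε hΔε _)
    · rintro s ⟨a, rfl⟩
      rw [hL, hR]
  · intro I hI
    have hfm : Measurable (fun s : ℝ => 2 * π / J * (⌈s / Δε⌉ : ℝ)) := aux_ceil_meas J Δε
    have hbd : ∀ x ∈ Set.Ioc (0:ℝ) I,
        ‖2 * π / J * (⌈x / Δε⌉ : ℝ)‖ ≤ 2 * π / J * (⌈I / Δε⌉ : ℝ) := by
      intro x hx
      have h0 : (0:ℝ) ≤ (⌈x / Δε⌉ : ℝ) := by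
        exact_mod_cast (Int.ceil_pos.2 (div_pos hx.1 hΔε)).le
      have h1 : (⌈x / Δε⌉ : ℝ) ≤ (⌈I / Δε⌉ : ℝ) := by
        exact_mod_cast Int.ceil_le_ceil (div_le_div_of_nonneg_right hx.2 hΔε.le)
      rw [Real.norm_eq_abs, abs_of_nonneg (by positivity)]
      exact mul_le_mul_of_nonneg_left h1 (by positivity)
    have hint : IntegrableOn (fun s : ℝ => 2 * π / J * (⌈s / Δε⌉ : ℝ)) (Set.Ioc 0 I) volume := by
      refine Measure.integrableOn_of_bounded (M := 2 * π / J * (⌈I / Δε⌉ : ℝ))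
        measure_Ioc_lt_top.ne hfm.aestronglyMeasurable ?_
      exact (ae_restrict_iff' measurableSet_Ioc).2 (ae_of_all _ hbd)
    have hnn : 0 ≤ᵐ[volume.restrict (Set.Ioc (0:ℝ) I)]
        (fun s : ℝ => 2 * π / J * (⌈s / Δε⌉ : ℝ)) := by
      refine (ae_restrict_iff' measurableSet_Ioc).2 (ae_of_all _ fun x hx => ?_)
      have h0 : (0:ℝ) ≤ (⌈x / Δε⌉ : ℝ) := by
        exact_mod_cast (Int.ceil_pos.2 (div_pos hx.1 hΔε)).le
      positivity
    rw [aux_map J Δε hJ I, intervalIntegral.integral_of_le hI,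
      MeasureTheory.ofReal_integral_eq_lintegral_ofReal hint hnn]
    exact (aux_lint J Δε hJ hΔε I).symm
end

section
/- Let J > 0 and Δε > 0, and let ν be the measure on [0,∞) with density I ↦ (2π/J)·⌈I/Δε⌉ with respect to Lebesgue measure. Define F(I) = ν([0,I)) and F^←(q) = inf{I ≥ 0 : F(I) ≥ q} for q > 0. Then for every q > 0, F^←(q) = Δε·( q̂/(ℓ(q̂)+1) + ℓ(q̂)/2 ), where q̂ = Jq/(2πΔε) and ℓ(q̂) = ⌊4q̂ / (√(1 + 8q̂) + 1)⌋. -/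
open MeasureTheory Real ENNReal


lemma ceil_intble (a b : ℝ) : IntervalIntegrable (fun x => (⌈x⌉ : ℝ)) volume a b :=
  Monotone.intervalIntegrable (fun x y h => by exact_mod_cast Int.ceil_mono h)

lemma ceil_piece (c t : ℝ) (hm : ∃ m : ℤ, (m:ℝ) = c) (hct : c ≤ t) (ht : t ≤ c + 1) :
    ∫ x in c..t, (⌈x⌉:ℝ) = (c+1)*(t-c) := by
  obtain ⟨m, rfl⟩ := hm
  rw [intervalIntegral.integral_of_le hct]
  rw [setIntegral_congr_fun measurableSet_Ioc (g := fun _ => ((m:ℝ)+1))]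
  · rw [setIntegral_const, measureReal_def, Real.volume_Ioc, smul_eq_mul]
    rw [ENNReal.toReal_ofReal (by linarith)]
    ring
  · intro x hx
    have h1 : (⌈x⌉ : ℤ) = m + 1 := by
      rw [Int.ceil_eq_iff]
      push_cast
      exact ⟨by linarith [hx.1], by linarith [hx.2]⟩
    show ((⌈x⌉:ℤ):ℝ) = (m:ℝ)+1
    rw [h1]; push_cast; ring

lemma ceil_cum (n : ℕ) : ∀ t : ℝ, (n:ℝ) ≤ t → t ≤ n+1 →
    ∫ x in (0:ℝ)..t, (⌈x⌉:ℝ) = n*(n+1)/2 + (n+1)*(t-n) := by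
  induction n with
  | zero =>
    intro t h0 h1
    push_cast at h0 h1
    rw [ceil_piece 0 t ⟨0, by norm_num⟩ h0 (by linarith)]
    norm_num
  | succ n ih =>
    intro t h0 h1
    push_cast at h0 h1
    have hn1 : ((n:ℝ)+1) ≤ t := by linarith
    have := intervalIntegral.integral_add_adjacent_intervals (a := 0) (b := ((n:ℝ)+1)) (c := t)
      (f := fun x => (⌈x⌉:ℝ)) (ceil_intble _ _) (ceil_intble _ _)
    rw [← this, ih ((n:ℝ)+1) (by linarith) le_rfl,
      ceil_piece ((n:ℝ)+1) t ⟨n+1, by push_cast; ring⟩ hn1 (by linarith)]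
    push_cast
    ring

noncomputable def Greal (t : ℝ) : ℝ := ∫ x in (0:ℝ)..t, (⌈x⌉:ℝ)

lemma Greal_mono {a b : ℝ} (ha : 0 ≤ a) (hab : a ≤ b) : Greal a ≤ Greal b := by
  have := intervalIntegral.integral_add_adjacent_intervals (a := 0) (b := a) (c := b)
      (f := fun x => (⌈x⌉:ℝ)) (ceil_intble _ _) (ceil_intble _ _)
  have h2 : 0 ≤ ∫ x in a..b, (⌈x⌉:ℝ) := by
    apply intervalIntegral.integral_nonneg hab
    intro u hu
    exact_mod_cast Int.ceil_nonneg (by linarith [hu.1])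
  unfold Greal; linarith

lemma Greal_strict {a b : ℝ} (ha : 0 ≤ a) (hab : a < b) : Greal a < Greal b := by
  set m := (a+b)/2 with hm
  have hm0 : 0 < m := by simp [hm]; linarith
  have ham : a ≤ m := by simp [hm]; linarith
  have hmb : m ≤ b := by simp [hm]; linarith
  have h1 : Greal a ≤ Greal m := Greal_mono ha ham
  have h2 : Greal m + (b - m) ≤ Greal b := by
    have := intervalIntegral.integral_add_adjacent_intervals (a := 0) (b := m) (c := b)
        (f := fun x => (⌈x⌉:ℝ)) (ceil_intble _ _) (ceil_intble _ _)
    have h3 : b - m ≤ ∫ x in m..b, (⌈x⌉:ℝ) := by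
      have h4 : ∫ x in m..b, (1:ℝ) = b - m := by simp
      rw [← h4]
      apply intervalIntegral.integral_mono_on hmb (by simp) (ceil_intble _ _)
      intro x hx
      have : (0:ℤ) < ⌈x⌉ := Int.ceil_pos.mpr (lt_of_lt_of_le hm0 hx.1)
      exact_mod_cast this
    unfold Greal; linarith
  linarith

lemma F_formula (J Δε : ℝ) (hJ : 0 < J) (hΔε : 0 < Δε) (I : ℝ) (hI : 0 ≤ I) :
    ((volume.restrict (Set.Ici (0:ℝ))).withDensity
      (fun x => ENNReal.ofReal (2*π/J*(⌈x/Δε⌉:ℝ)))) (Set.Ico 0 I)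
    = ENNReal.ofReal (2*π/J * (Δε * Greal (I/Δε))) := by
  have hmono : Monotone (fun x : ℝ => 2*π/J*(⌈x/Δε⌉:ℝ)) := by
    intro x y h
    have : (⌈x/Δε⌉:ℝ) ≤ (⌈y/Δε⌉:ℝ) := by
      exact_mod_cast Int.ceil_mono (by gcongr)
    have hc : 0 ≤ 2*π/J := by positivity
    exact mul_le_mul_of_nonneg_left this hc
  have hint : IntegrableOn (fun x : ℝ => 2*π/J*(⌈x/Δε⌉:ℝ)) (Set.Ico 0 I) volume :=
    (MonotoneOn.integrableOn_isCompact isCompact_Icc (hmono.monotoneOn _)).mono_set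
      Set.Ico_subset_Icc_self
  have hnn : 0 ≤ᵐ[volume.restrict (Set.Ico 0 I)] (fun x : ℝ => 2*π/J*(⌈x/Δε⌉:ℝ)) :=
    (ae_restrict_iff' measurableSet_Ico).mpr (ae_of_all _ fun x hx =>
      mul_nonneg (by positivity) (by exact_mod_cast Int.ceil_nonneg (div_nonneg hx.1 hΔε.le)))
  rw [withDensity_apply _ measurableSet_Ico, Measure.restrict_restrict measurableSet_Ico,
    Set.inter_eq_left.mpr Set.Ico_subset_Ici_self,
    ← ofReal_integral_eq_lintegral_ofReal hint hnn]
  congr 1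
  rw [integral_Ico_eq_integral_Ioo, ← integral_Ioc_eq_integral_Ioo,
    ← intervalIntegral.integral_of_le hI, intervalIntegral.integral_const_mul]
  congr 1
  have := intervalIntegral.integral_comp_div (a := 0) (b := I) (c := Δε)
    (fun u => (⌈u⌉:ℝ)) hΔε.ne'
  rw [this, zero_div, smul_eq_mul]
  rfl

lemma Greal_zero : Greal 0 = 0 := by simp [Greal]

lemma Greal_cum (n : ℕ) (t : ℝ) (h0 : (n:ℝ) ≤ t) (h1 : t ≤ n+1) :
    Greal t = n*(n+1)/2 + (n+1)*(t-n) := ceil_cum n t h0 h1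

/-- The total internal energy quantile function of the diatomic model: for the energy law
`ν` with density `I ↦ (2π/J)⌈I/Δε⌉` on `[0,∞)`, the left generalized inverse of
`F(I) = ν([0,I))` is `q ↦ Δε·(q̂/(ℓ(q̂)+1) + ℓ(q̂)/2)` with `q̂ = Jq/(2πΔε)` and
`ℓ(q̂) = ⌊4q̂/(√(1+8q̂)+1)⌋`. -/
theorem stmt_6 (J Δε : ℝ) (hJ : 0 < J) (hΔε : 0 < Δε) :
    let ν : Measure ℝ := (volume.restrict (Set.Ici (0 : ℝ))).withDensity
      (fun I => ENNReal.ofReal (2 * π / J * (⌈I / Δε⌉ : ℝ)))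
    let F : ℝ → ℝ≥0∞ := fun I => ν (Set.Ico 0 I)
    let Finv : ℝ → ℝ := fun q => sInf {I : ℝ | 0 ≤ I ∧ ENNReal.ofReal q ≤ F I}
    ∀ q : ℝ, 0 < q →
      Finv q =
        Δε * ((J * q / (2 * π * Δε)) / ((⌊4 * (J * q / (2 * π * Δε)) /
              (Real.sqrt (1 + 8 * (J * q / (2 * π * Δε))) + 1)⌋ : ℝ) + 1) +
          (⌊4 * (J * q / (2 * π * Δε)) /
              (Real.sqrt (1 + 8 * (J * q / (2 * π * Δε))) + 1)⌋ : ℝ) / 2) := by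
  intro ν F Finv q hq
  simp only [Finv, F, ν]
  clear ν F Finv
  have hπ := Real.pi_pos
  set q' : ℝ := J * q / (2 * π * Δε) with hq'def
  clear_value q'
  have hq' : 0 < q' := by rw [hq'def]; positivity
  set r : ℝ := Real.sqrt (1 + 8 * q') with hrdef
  clear_value r
  have hr2 : r ^ 2 = 1 + 8 * q' := by rw [hrdef]; exact Real.sq_sqrt (by positivity)
  have hr1 : 1 ≤ r := by nlinarith [Real.sqrt_nonneg (1 + 8 * q'), hr2]
  set s : ℝ := (r - 1) / 2 with hsdef
  clear_value s
  have hs0 : 0 ≤ s := by rw [hsdef]; linarith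
  have hqs : q' = s * (s + 1) / 2 := by rw [hsdef]; nlinarith [hr2]
  have heq : 4 * q' / (r + 1) = s := by
    rw [hsdef]; rw [div_eq_iff (by linarith : r + 1 ≠ 0)]; nlinarith [hr2]
  rw [heq]
  set ℓ : ℤ := ⌊s⌋ with hℓdef
  clear_value ℓ
  have hℓ0 : 0 ≤ ℓ := hℓdef ▸ Int.floor_nonneg.mpr hs0
  have hℓ1 : (ℓ:ℝ) ≤ s := hℓdef ▸ Int.floor_le s
  have hℓ2 : s < ℓ + 1 := by rw [hℓdef]; exact_mod_cast Int.lt_floor_add_one s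
  have hℓ0' : (0:ℝ) ≤ ℓ := by exact_mod_cast hℓ0
  have hlp : (0:ℝ) < (ℓ:ℝ) + 1 := by linarith
  have hlow : (ℓ:ℝ) * (ℓ + 1) / 2 ≤ q' := by nlinarith
  have hupp : q' < ((ℓ:ℝ) + 1) * (ℓ + 2) / 2 := by nlinarith
  have hd1 : (ℓ:ℝ) / 2 ≤ q' / ((ℓ:ℝ) + 1) := by
    rw [div_le_div_iff₀ (by norm_num) hlp]; nlinarith
  have hd2 : q' / ((ℓ:ℝ) + 1) < (ℓ:ℝ) / 2 + 1 := by
    rw [div_lt_iff₀ hlp]; nlinarith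
  set t : ℝ := q' / ((ℓ:ℝ) + 1) + (ℓ:ℝ) / 2 with htdef
  clear_value t
  have hdm : q' / ((ℓ:ℝ) + 1) * ((ℓ:ℝ) + 1) = q' := div_mul_cancel₀ _ (ne_of_gt hlp)
  have ht1 : (ℓ:ℝ) ≤ t := by rw [htdef]; linarith
  have ht2 : t < (ℓ:ℝ) + 1 := by rw [htdef]; linarith
  have ht0 : 0 ≤ t := le_trans hℓ0' ht1
  have hn : ((ℓ.toNat : ℕ) : ℝ) = (ℓ : ℝ) := by exact_mod_cast Int.toNat_of_nonneg hℓ0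
  have hGt : Greal t = q' := by
    rw [Greal_cum ℓ.toNat t (by rw [hn]; exact ht1) (by rw [hn]; linarith), hn]
    nlinarith [hdm]
  set Istar : ℝ := Δε * t with hIdef
  clear_value Istar
  have hI0 : 0 ≤ Istar := hIdef ▸ mul_nonneg hΔε.le ht0
  have hIdiv : Istar / Δε = t := by rw [hIdef]; field_simp
  have hc : 2 * π / J * (Δε * q') = q := by
    rw [hq'def]; field_simp
  have hFI : ((volume.restrict (Set.Ici (0:ℝ))).withDensity
      (fun x => ENNReal.ofReal (2 * π / J * (⌈x / Δε⌉:ℝ)))) (Set.Ico 0 Istar)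
      = ENNReal.ofReal q := by
    rw [F_formula J Δε hJ hΔε Istar hI0, hIdiv, hGt, hc]
  have hmem : Istar ∈ {I : ℝ | 0 ≤ I ∧ ENNReal.ofReal q ≤
      ((volume.restrict (Set.Ici (0:ℝ))).withDensity
      (fun x => ENNReal.ofReal (2 * π / J * (⌈x / Δε⌉:ℝ)))) (Set.Ico 0 I)} :=
    ⟨hI0, le_of_eq hFI.symm⟩
  have hlb : ∀ I ∈ {I : ℝ | 0 ≤ I ∧ ENNReal.ofReal q ≤
      ((volume.restrict (Set.Ici (0:ℝ))).withDensity
      (fun x => ENNReal.ofReal (2 * π / J * (⌈x / Δε⌉:ℝ)))) (Set.Ico 0 I)}, Istar ≤ I := by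
    rintro I ⟨hI0', hIF⟩
    by_contra h
    push_neg at h
    rw [F_formula J Δε hJ hΔε I hI0'] at hIF
    have hGnn : 0 ≤ Greal (I / Δε) := by
      rw [← Greal_zero]; exact Greal_mono le_rfl (div_nonneg hI0' hΔε.le)
    have hq2 : q ≤ 2 * π / J * (Δε * Greal (I / Δε)) :=
      (ENNReal.ofReal_le_ofReal_iff (by positivity)).mp hIF
    have hIdt : I / Δε < t := by
      rw [← hIdiv]; exact div_lt_div_of_pos_right h hΔε
    have hstrict : Greal (I / Δε) < q' := by
      rw [← hGt]; exact Greal_strict (div_nonneg hI0' hΔε.le) hIdt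
    have : 2 * π / J * (Δε * Greal (I / Δε)) < 2 * π / J * (Δε * q') := by
      apply mul_lt_mul_of_pos_left _ (by positivity)
      exact mul_lt_mul_of_pos_left hstrict hΔε
    rw [hc] at this
    linarith
  exact le_antisymm (csInf_le ⟨Istar, hlb⟩ hmem) (le_csInf ⟨Istar, hmem⟩ hlb)
end

section
/- Let (E₁, μ₁) and (E₂, μ₂) be measurable spaces with σ-finite nonzero measures, and let ε̄₁ : E₁ → [0,∞) and ε̄₂ : E₂ → [0,∞) be measurable. Let β > 0 and assume Zᵢ(β) := ∫_{Eᵢ} e^{−β ε̄ᵢ} dμᵢ < ∞ and ∫_{Eᵢ} ε̄ᵢ e^{−β ε̄ᵢ} dμᵢ < ∞ for i = 1, 2. Then 2β · ( ∫_{E₁×E₂} (ε̄₁(ζ₁) + ε̄₂(ζ₂)) e^{−β(ε̄₁(ζ₁)+ε̄₂(ζ₂))} d(μ₁⊗μ₂) ) / ( ∫_{E₁×E₂} e^{−β(ε̄₁(ζ₁)+ε̄₂(ζ₂))} d(μ₁⊗μ₂) ) = 2β·(∫_{E₁} ε̄₁ e^{−β ε̄₁} dμ₁)/Z₁(β) +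 2β·(∫_{E₂} ε̄₂ e^{−β ε̄₂} dμ₂)/Z₂(β); that is, the number of internal degrees of freedom of the independent combination is the sum δ_{1&2} = δ₁ + δ₂ of those of the two models. -/
open MeasureTheory Real

/-- The number of internal degrees of freedom of the independent combination of two
internal-state models is the sum of those of the two models: `δ_{1&2} = δ₁ + δ₂`. -/
theorem stmt_10 {E₁ E₂ : Type*} [MeasurableSpace E₁] [MeasurableSpace E₂]
    (μ₁ : Measure E₁) (μ₂ : Measure E₂) [SigmaFinite μ₁] [SigmaFinite μ₂]
    (hμ₁ : μ₁ ≠ 0) (hμ₂ : μ₂ ≠ 0)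
    (ε₁ : E₁ → ℝ) (ε₂ : E₂ → ℝ) (hε₁ : Measurable ε₁) (hε₂ : Measurable ε₂)
    (hε₁nn : ∀ ζ, 0 ≤ ε₁ ζ) (hε₂nn : ∀ ζ, 0 ≤ ε₂ ζ)
    (β : ℝ) (hβ : 0 < β)
    (hZ₁ : Integrable (fun ζ₁ => Real.exp (-β * ε₁ ζ₁)) μ₁)
    (hZ₂ : Integrable (fun ζ₂ => Real.exp (-β * ε₂ ζ₂)) μ₂)
    (hE₁ : Integrable (fun ζ₁ => ε₁ ζ₁ * Real.exp (-β * ε₁ ζ₁)) μ₁)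
    (hE₂ : Integrable (fun ζ₂ => ε₂ ζ₂ * Real.exp (-β * ε₂ ζ₂)) μ₂) :
    2 * β * (∫ ζ : E₁ × E₂, (ε₁ ζ.1 + ε₂ ζ.2) *
          Real.exp (-β * (ε₁ ζ.1 + ε₂ ζ.2)) ∂μ₁.prod μ₂) /
        (∫ ζ : E₁ × E₂, Real.exp (-β * (ε₁ ζ.1 + ε₂ ζ.2)) ∂μ₁.prod μ₂) =
      2 * β * (∫ ζ₁, ε₁ ζ₁ * Real.exp (-β * ε₁ ζ₁) ∂μ₁) /
          (∫ ζ₁, Real.exp (-β * ε₁ ζ₁) ∂μ₁) +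
        2 * β * (∫ ζ₂, ε₂ ζ₂ * Real.exp (-β * ε₂ ζ₂) ∂μ₂) /
          (∫ ζ₂, Real.exp (-β * ε₂ ζ₂) ∂μ₂) := by
  set Z₁ := ∫ ζ₁, Real.exp (-β * ε₁ ζ₁) ∂μ₁ with hZ₁def
  set Z₂ := ∫ ζ₂, Real.exp (-β * ε₂ ζ₂) ∂μ₂ with hZ₂def
  set A₁ := ∫ ζ₁, ε₁ ζ₁ * Real.exp (-β * ε₁ ζ₁) ∂μ₁
  set A₂ := ∫ ζ₂, ε₂ ζ₂ * Real.exp (-β * ε₂ ζ₂) ∂μ₂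
  have hexp : ∀ (a b : ℝ), Real.exp (-β * (a + b)) =
      Real.exp (-β * a) * Real.exp (-β * b) := by
    intro a b
    rw [← Real.exp_add]; ring_nf
  -- denominator factorizes
  have hden : (∫ ζ : E₁ × E₂, Real.exp (-β * (ε₁ ζ.1 + ε₂ ζ.2)) ∂μ₁.prod μ₂)
      = Z₁ * Z₂ := by
    simp only [hexp]
    exact integral_prod_mul (fun ζ₁ => Real.exp (-β * ε₁ ζ₁))
      (fun ζ₂ => Real.exp (-β * ε₂ ζ₂))
  -- numerator
  have hnum : (∫ ζ : E₁ × E₂, (ε₁ ζ.1 + ε₂ ζ.2) *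
      Real.exp (-β * (ε₁ ζ.1 + ε₂ ζ.2)) ∂μ₁.prod μ₂) = A₁ * Z₂ + Z₁ * A₂ := by
    have h1 : Integrable (fun ζ : E₁ × E₂ =>
        (ε₁ ζ.1 * Real.exp (-β * ε₁ ζ.1)) * Real.exp (-β * ε₂ ζ.2)) (μ₁.prod μ₂) :=
      hE₁.mul_prod hZ₂
    have h2 : Integrable (fun ζ : E₁ × E₂ =>
        Real.exp (-β * ε₁ ζ.1) * (ε₂ ζ.2 * Real.exp (-β * ε₂ ζ.2))) (μ₁.prod μ₂) :=
      hZ₁.mul_prod hE₂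
    have heq : ∀ ζ : E₁ × E₂, (ε₁ ζ.1 + ε₂ ζ.2) *
        Real.exp (-β * (ε₁ ζ.1 + ε₂ ζ.2)) =
        (ε₁ ζ.1 * Real.exp (-β * ε₁ ζ.1)) * Real.exp (-β * ε₂ ζ.2) +
        Real.exp (-β * ε₁ ζ.1) * (ε₂ ζ.2 * Real.exp (-β * ε₂ ζ.2)) := by
      intro ζ; rw [hexp]; ring
    calc (∫ ζ : E₁ × E₂, (ε₁ ζ.1 + ε₂ ζ.2) *
        Real.exp (-β * (ε₁ ζ.1 + ε₂ ζ.2)) ∂μ₁.prod μ₂)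
        = ∫ ζ : E₁ × E₂, ((ε₁ ζ.1 * Real.exp (-β * ε₁ ζ.1)) * Real.exp (-β * ε₂ ζ.2) +
            Real.exp (-β * ε₁ ζ.1) * (ε₂ ζ.2 * Real.exp (-β * ε₂ ζ.2))) ∂μ₁.prod μ₂ := by
          exact integral_congr_ae (Filter.Eventually.of_forall heq)
      _ = A₁ * Z₂ + Z₁ * A₂ := by
          rw [integral_add h1 h2,
            integral_prod_mul (fun ζ₁ => ε₁ ζ₁ * Real.exp (-β * ε₁ ζ₁))
              (fun ζ₂ => Real.exp (-β * ε₂ ζ₂)),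
            integral_prod_mul (fun ζ₁ => Real.exp (-β * ε₁ ζ₁))
              (fun ζ₂ => ε₂ ζ₂ * Real.exp (-β * ε₂ ζ₂))]
  -- positivity of partition functions
  have hZ₁pos : 0 < Z₁ := by
    rw [hZ₁def]
    apply (integral_pos_iff_support_of_nonneg_ae
      (Filter.Eventually.of_forall fun x => (Real.exp_pos _).le) hZ₁).2
    have : (Function.support fun ζ₁ => Real.exp (-β * ε₁ ζ₁)) = Set.univ := by
      ext x; simp [Function.support, Real.exp_ne_zero]
    rw [this]
    simpa [Measure.measure_univ_eq_zero] using hμ₁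
  have hZ₂pos : 0 < Z₂ := by
    rw [hZ₂def]
    apply (integral_pos_iff_support_of_nonneg_ae
      (Filter.Eventually.of_forall fun x => (Real.exp_pos _).le) hZ₂).2
    have : (Function.support fun ζ₂ => Real.exp (-β * ε₂ ζ₂)) = Set.univ := by
      ext x; simp [Function.support, Real.exp_ne_zero]
    rw [this]
    simpa [Measure.measure_univ_eq_zero] using hμ₂
  rw [hden, hnum]
  field_simp
end

section
/- Let (E, μ) be a measure space with μ ≠ 0, ε̄ : E → [0,∞) measurable, k_B > 0, and β₁ ≥ 0 such that Z(β) := ∫_E e^{−β ε̄} dμ < ∞ for all β > β₁. For T > 0 with β := 1/(k_B T) > β₁, define δ(T) = 2β (∫_E ε̄ e^{−β ε̄} dμ)/Z(β). Then T ↦ T δ(T) is differentiable on {T > 0 : 1/(k_B T) > β₁}, and at every such T, 3/2 + (1/2)·d(T δ(T))/dT = 3/2 + β²·( (∫_E ε̄² e^{−β ε̄} dμ)/Z(β) − ( (∫_E ε̄ e^{−β ε̄} dμ)/Z(β) )² ); that is, the heat capacity at constant volume c_V(T) = 3/2 + (1/2)·d(T δ(T))/dT equals 3/2 plus the variance of β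 ε̄ under the Gibbs probability measure e^{−β ε̄} dμ / Z(β). -/
open MeasureTheory Real Filter Metric

lemma aux_pow_exp_le {c : ℝ} (hc : 0 < c) (n : ℕ) {x : ℝ} (hx : 0 ≤ x) :
    x ^ n * Real.exp (-c * x) ≤ (n.factorial : ℝ) / c ^ n := by
  have h2 : (c * x) ^ n ≤ (n.factorial : ℝ) * Real.exp (c * x) := by
    have h := Real.pow_div_factorial_le_exp (x := c * x) (mul_nonneg hc.le hx) n
    rw [div_le_iff₀ (by positivity)] at h
    linarith
  have hexp : (0:ℝ) < Real.exp (c * x) := Real.exp_pos _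
  rw [neg_mul, Real.exp_neg, ← div_eq_mul_inv,
    div_le_div_iff₀ hexp (by positivity)]
  calc x ^ n * c ^ n = (c * x) ^ n := by rw [mul_pow]; ring
    _ ≤ (n.factorial : ℝ) * Real.exp (c * x) := h2

lemma aux_int {E : Type*} [MeasurableSpace E] (μ : Measure E)
    (ε : E → ℝ) (hεmeas : Measurable ε) (hεnn : ∀ ζ, 0 ≤ ε ζ) {β₁ : ℝ}
    (hZ : ∀ β : ℝ, β₁ < β → Integrable (fun ζ => Real.exp (-β * ε ζ)) μ)
    (n : ℕ) {β : ℝ} (hβ : β₁ < β) :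
    Integrable (fun ζ => ε ζ ^ n * Real.exp (-β * ε ζ)) μ := by
  set β' := (β₁ + β) / 2 with hβ'def
  have hβ' : β₁ < β' := by rw [hβ'def]; linarith
  have hc : 0 < β - β' := by rw [hβ'def]; linarith
  set M := ((n.factorial : ℝ) / (β - β') ^ n) with hM
  refine ((hZ β' hβ').const_mul M).mono' ?_ ?_
  · exact ((hεmeas.pow_const n).mul ((hεmeas.const_mul (-β)).exp)).aestronglyMeasurable
  · filter_upwards with ζ
    have h1 : ε ζ ^ n * Real.exp (-(β - β') * ε ζ) ≤ M := aux_pow_exp_le hc n (hεnn ζ)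
    have h2 : Real.exp (-β * ε ζ) = Real.exp (-(β - β') * ε ζ) * Real.exp (-β' * ε ζ) := by
      rw [← Real.exp_add]; ring_nf
    rw [Real.norm_eq_abs, abs_of_nonneg
      (mul_nonneg (pow_nonneg (hεnn ζ) _) (Real.exp_pos _).le)]
    calc ε ζ ^ n * Real.exp (-β * ε ζ)
        = (ε ζ ^ n * Real.exp (-(β - β') * ε ζ)) * Real.exp (-β' * ε ζ) := by rw [h2]; ring
      _ ≤ M * Real.exp (-β' * ε ζ) := mul_le_mul_of_nonneg_right h1 (Real.exp_pos _).le

lemma aux_deriv {E : Type*} [MeasurableSpace E] (μ : Measure E)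
    (ε : E → ℝ) (hεmeas : Measurable ε) (hεnn : ∀ ζ, 0 ≤ ε ζ) {β₁ : ℝ}
    (hZ : ∀ β : ℝ, β₁ < β → Integrable (fun ζ => Real.exp (-β * ε ζ)) μ)
    (n : ℕ) {β : ℝ} (hβ : β₁ < β) :
    HasDerivAt (fun b => ∫ ζ, ε ζ ^ n * Real.exp (-b * ε ζ) ∂μ)
      (-∫ ζ, ε ζ ^ (n + 1) * Real.exp (-β * ε ζ) ∂μ) β := by
  set r := (β - β₁) / 2 with hrdef
  have hrpos : 0 < r := by rw [hrdef]; linarith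
  have hβ' : β₁ < β - r := by rw [hrdef]; linarith
  have key := hasDerivAt_integral_of_dominated_loc_of_deriv_le (μ := μ) (𝕜 := ℝ)
    (F := fun b ζ => ε ζ ^ n * Real.exp (-b * ε ζ))
    (F' := fun b ζ => -(ε ζ ^ (n + 1) * Real.exp (-b * ε ζ)))
    (x₀ := β) (bound := fun ζ => ε ζ ^ (n + 1) * Real.exp (-(β - r) * ε ζ))
    (ball_mem_nhds β hrpos) ?_ ?_ ?_ ?_ ?_ ?_
  · rcases key with ⟨-, hd⟩
    simpa [integral_neg] using hd
  · filter_upwards with b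
    exact ((hεmeas.pow_const n).mul ((hεmeas.const_mul (-b)).exp)).aestronglyMeasurable
  · exact aux_int μ ε hεmeas hεnn hZ n hβ
  · exact (((hεmeas.pow_const (n+1)).mul
      ((hεmeas.const_mul (-β)).exp)).neg).aestronglyMeasurable
  · filter_upwards with ζ
    intro b hb
    rw [mem_ball, Real.dist_eq, abs_lt] at hb
    have hble : β - r ≤ b := by linarith [hb.1]
    rw [norm_neg, Real.norm_eq_abs, abs_of_nonneg
      (mul_nonneg (pow_nonneg (hεnn ζ) _) (Real.exp_pos _).le)]
    have : Real.exp (-b * ε ζ) ≤ Real.exp (-(β - r) * ε ζ) := by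
      apply Real.exp_le_exp.mpr
      have := hεnn ζ
      nlinarith
    exact mul_le_mul_of_nonneg_left this (pow_nonneg (hεnn ζ) _)
  · exact aux_int μ ε hεmeas hεnn hZ (n + 1) hβ'
  · filter_upwards with ζ
    intro b _
    have h0 : HasDerivAt (fun b : ℝ => -b * ε ζ) (-ε ζ) b := by
      simpa using ((hasDerivAt_id b).neg.mul_const (ε ζ))
    have h1 := (h0.exp).const_mul (ε ζ ^ n)
    exact h1.congr_deriv (by ring)

/-- The heat capacity at constant volume `c_V(T) = 3/2 + (1/2) d(Tδ(T))/dT` equals `3/2`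
plus the variance of `βε̄` under the Gibbs probability measure `e^{−βε̄}dμ/Z(β)`,
where `β = 1/(k_B T)` and `δ(T) = 2β (∫ ε̄ e^{−βε̄} dμ)/Z(β)`. -/
theorem stmt_17 {E : Type*} [MeasurableSpace E] (μ : Measure E) (hμ : μ ≠ 0)
    (ε : E → ℝ) (hεmeas : Measurable ε) (hεnn : ∀ ζ, 0 ≤ ε ζ)
    (kB : ℝ) (hkB : 0 < kB) (β₁ : ℝ) (hβ₁ : 0 ≤ β₁)
    (hZ : ∀ β : ℝ, β₁ < β → Integrable (fun ζ => Real.exp (-β * ε ζ)) μ) :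
    let Z : ℝ → ℝ := fun β => ∫ ζ, Real.exp (-β * ε ζ) ∂μ
    let δ : ℝ → ℝ := fun T =>
      2 * (1 / (kB * T)) * (∫ ζ, ε ζ * Real.exp (-(1 / (kB * T)) * ε ζ) ∂μ) /
        Z (1 / (kB * T))
    ∀ T : ℝ, 0 < T → β₁ < 1 / (kB * T) →
      DifferentiableAt ℝ (fun T => T * δ T) T ∧
      3 / 2 + 1 / 2 * deriv (fun T => T * δ T) T =
        3 / 2 + (1 / (kB * T)) ^ 2 *
          ((∫ ζ, ε ζ ^ 2 * Real.exp (-(1 / (kB * T)) * ε ζ) ∂μ) / Z (1 / (kB * T)) -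
            ((∫ ζ, ε ζ * Real.exp (-(1 / (kB * T)) * ε ζ) ∂μ) / Z (1 / (kB * T))) ^ 2) := by
  intro Z δ T hT hβT
  have hkT : 0 < kB * T := mul_pos hkB hT
  set β : ℝ := 1 / (kB * T) with hβdef
  set F0 : ℝ → ℝ := fun b => ∫ ζ, Real.exp (-b * ε ζ) ∂μ with hF0def
  set F1 : ℝ → ℝ := fun b => ∫ ζ, ε ζ * Real.exp (-b * ε ζ) ∂μ with hF1def
  set F2 : ℝ → ℝ := fun b => ∫ ζ, ε ζ ^ 2 * Real.exp (-b * ε ζ) ∂μ with hF2def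
  -- derivatives of F0 and F1
  have hD0 : HasDerivAt F0 (-F1 β) β := by
    have := aux_deriv μ ε hεmeas hεnn hZ 0 hβT
    simpa [hF0def, hF1def] using this
  have hD1 : HasDerivAt F1 (-F2 β) β := by
    have := aux_deriv μ ε hεmeas hεnn hZ 1 hβT
    simpa [hF1def, hF2def] using this
  -- positivity of F0 β
  have hF0pos : 0 < F0 β := by
    have : NeZero μ := ⟨hμ⟩
    exact integral_exp_pos (hZ β hβT)
  have hF0ne : F0 β ≠ 0 := hF0pos.ne'
  -- derivative of the quotient g = F1/F0
  have hDg : HasDerivAt (fun b => F1 b / F0 b)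
      ((-F2 β * F0 β - F1 β * -F1 β) / F0 β ^ 2) β := hD1.div hD0 hF0ne
  -- derivative of T ↦ 1/(kB T)
  have hDβ : HasDerivAt (fun t : ℝ => 1 / (kB * t)) (-kB / (kB * T) ^ 2) T := by
    have h1 : HasDerivAt (fun t : ℝ => kB * t) kB T := by
      simpa using (hasDerivAt_id T).const_mul kB
    have h2 : HasDerivAt (fun t : ℝ => (kB * t)⁻¹) (-kB / (kB * T) ^ 2) T := h1.inv hkT.ne'
    simpa [one_div] using h2
  -- composite
  have hcomp : HasDerivAt (fun t : ℝ => 2 / kB * (F1 (1 / (kB * t)) / F0 (1 / (kB * t))))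
      (2 / kB * ((-F2 β * F0 β - F1 β * -F1 β) / F0 β ^ 2 * (-kB / (kB * T) ^ 2))) T := by
    exact (hDg.comp T hDβ).const_mul (2 / kB)
  -- the two functions agree near T
  have heq : (fun t => t * δ t) =ᶠ[nhds T]
      (fun t : ℝ => 2 / kB * (F1 (1 / (kB * t)) / F0 (1 / (kB * t)))) := by
    filter_upwards [eventually_gt_nhds hT] with t ht
    show t * (2 * (1 / (kB * t)) * F1 (1 / (kB * t)) / F0 (1 / (kB * t))) = _
    have hkt : kB * t ≠ 0 := (mul_pos hkB ht).ne'
    have ht' : t ≠ 0 := ne_of_gt ht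
    have hrw : t * (2 * (1/(kB*t)) * F1 (1/(kB*t)) / F0 (1/(kB*t)))
        = (t/t) * (2/kB * (F1 (1/(kB*t)) / F0 (1/(kB*t)))) := by ring
    rw [hrw, div_self ht', one_mul]

  have hTd : HasDerivAt (fun t => t * δ t)
      (2 / kB * ((-F2 β * F0 β - F1 β * -F1 β) / F0 β ^ 2 * (-kB / (kB * T) ^ 2))) T :=
    hcomp.congr_of_eventuallyEq heq
  refine ⟨hTd.differentiableAt, ?_⟩
  rw [hTd.deriv]
  show (3:ℝ) / 2 + 1 / 2 * _ = 3 / 2 + β ^ 2 * (F2 β / F0 β - (F1 β / F0 β) ^ 2)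
  rw [hβdef]
  field_simp
  ring
end
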